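/- arXiv:2109.06811 — 2 statements merged into one kernel-verified Lean document; each statement's English description precedes it below -/
import Mathlib

section
/- Let f be a natural number, let R be a finite set of replicas, let F ⊆ R with |F| = 2f, let Faulty ⊆ R with |F ∩ Faulty| ≤ f, let D be a type of dependencies, and let S, S' : R → Finset D be report assignments with S' x = S x for all x ∈ F \ Faulty. Suppose S' is valid, meaning that for every dependency e, the number of x ∈ F with e ∈ S' x is either 0 or at least f+1. Then for every dependency d such that |{x ∈ F : d ∈ S x}| ≥ f+1, it holds that |{x ∈ F : d ∈ S' x}| ≥ f+1; in particular d belongs to the union of the reports in S' over F. -/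
theorem Finset.exists_mem_sdiff_of_card_inter_lt {α : Type*} [DecidableEq α]
    {s t u : Finset α} (hus : u ⊆ s) (hcard : (s ∩ t).card < u.card) :
    ∃ x ∈ u, x ∈ s \ t := by
  obtain ⟨x, hxu, hx⟩ := Finset.exists_mem_notMem_of_card_lt_card hcard
  exact ⟨x, hxu, Finset.mem_sdiff.2 ⟨hus hxu, fun hxt => hx (Finset.mem_inter.2 ⟨hus hxu, hxt⟩)⟩⟩

theorem manipulated_fpc_preserves_dependencies_general {α : Type*} [DecidableEq α]
    {D : Type*} [DecidableEq D] (f : ℕ)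
    (F Faulty : Finset α)
    (hFaultyCard : (F ∩ Faulty).card ≤ f)
    (S S' : α → Finset D)
    (hAgree : ∀ x ∈ F \ Faulty, S' x = S x)
    (hValid : ∀ e : D,
      (F.filter (fun x => e ∈ S' x)).card = 0 ∨
      f + 1 ≤ (F.filter (fun x => e ∈ S' x)).card) :
    ∀ d : D, f + 1 ≤ (F.filter (fun x => d ∈ S x)).card →
      f + 1 ≤ (F.filter (fun x => d ∈ S' x)).card ∧ d ∈ F.biUnion S' := by
  intro d hd
  obtain ⟨x, hxS, hxCorrect⟩ :=
    Finset.exists_mem_sdiff_of_card_inter_lt (Finset.filter_subset _ F)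
      (hFaultyCard.trans_lt hd)
  have hxS' : x ∈ F ∧ d ∈ S' x := by
    rw [Finset.mem_filter] at hxS
    exact ⟨hxS.1, hAgree x hxCorrect ▸ hxS.2⟩
  have hReported : f + 1 ≤ (F.filter (fun x => d ∈ S' x)).card :=
    (hValid d).resolve_left (Finset.card_ne_zero_of_mem (Finset.mem_filter.2 hxS'))
  exact ⟨hReported, Finset.mem_biUnion.2 ⟨x, hxS'⟩⟩

/-- A manipulated but valid fast-path certificate preserves committed
dependencies: if the honest reports `S` contain a dependency `d` at least
`f+1` times over the fast-path quorum `F` (of size `2f`, at most `f` of whose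
members are faulty), then any valid manipulated reports `S'` (agreeing with
`S` on correct members, and in which every occurring dependency is reported
`0` or at least `f+1` times) also contain `d` at least `f+1` times; in
particular `d` belongs to the union of the reports in `S'` over `F`. -/
theorem manipulated_fpc_preserves_dependencies {α : Type*} [DecidableEq α]
    {D : Type*} [DecidableEq D] (f : ℕ)
    (R F Faulty : Finset α) (hF : F ⊆ R) (hFcard : F.card = 2 * f)
    (hFaultyCard : (F ∩ Faulty).card ≤ f)
    (S S' : α → Finset D)
    (hAgree : ∀ x ∈ F \ Faulty, S' x = S x)
    (hValid : ∀ e : D,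
      (F.filter (fun x => e ∈ S' x)).card = 0 ∨
      f + 1 ≤ (F.filter (fun x => e ∈ S' x)).card) :
    ∀ d : D, f + 1 ≤ (F.filter (fun x => d ∈ S x)).card →
      f + 1 ≤ (F.filter (fun x => d ∈ S' x)).card ∧ d ∈ F.biUnion S' :=
  manipulated_fpc_preserves_dependencies_general f F Faulty hFaultyCard S S' hAgree hValid
end

section
/- Let f be a natural number, let R be a finite set of replicas, let F ⊆ R with |F| = 2f, let Faulty ⊆ R with |F ∩ Faulty| ≤ f, let D be a type of dependencies, and let S, S' : R → Finset D be report assignments with S' x = S x for all x ∈ F \ Faulty. Suppose S' is valid, meaning that for every dependency e, the number of x ∈ F with e ∈ S' x is either 0 or at least f+1. Then for every dependency d such that d ∉ S x for all x ∈ F \ Faulty, it holds that d ∉ S' x for all x ∈ F; that is, a dependency never reported by any correct member of F cannot appear in any valid (possibly manipulated) certificate. -/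
/-! Only faulty members of `F` can report a dependency that no correct member reports, so it is
reported at most `|F ∩ Faulty| ≤ f` times; validity then forces the count to zero. -/

theorem Finset.card_filter_le_card_inter_of_forall_sdiff {α : Type*} [DecidableEq α]
    {p : α → Prop} [DecidablePred p] {F G : Finset α} (h : ∀ x ∈ F \ G, ¬ p x) :
    (F.filter p).card ≤ (F ∩ G).card := by
  refine Finset.card_le_card fun x hx => ?_
  obtain ⟨hxF, hpx⟩ := Finset.mem_filter.mp hx
  by_contra hxG
  exact h x (Finset.mem_sdiff.mpr ⟨hxF, fun hG => hxG (Finset.mem_inter.mpr ⟨hxF, hG⟩)⟩) hpx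

theorem manipulated_fpc_no_fabricated_dependencies_general {α : Type*} [DecidableEq α]
    {D : Type*} [DecidableEq D] (f : ℕ)
    (F Faulty : Finset α)
    (hFaultyCard : (F ∩ Faulty).card ≤ f)
    (S S' : α → Finset D)
    (hAgree : ∀ x ∈ F \ Faulty, S' x = S x)
    (hValid : ∀ e : D,
      (F.filter (fun x => e ∈ S' x)).card = 0 ∨
      f + 1 ≤ (F.filter (fun x => e ∈ S' x)).card) :
    ∀ d : D, (∀ x ∈ F \ Faulty, d ∉ S x) → ∀ x ∈ F, d ∉ S' x := by
  intro d hd x hx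
  have hcorrect : ∀ y ∈ F \ Faulty, d ∉ S' y := fun y hy => hAgree y hy ▸ hd y hy
  have hfew : (F.filter (fun y => d ∈ S' y)).card ≤ f :=
    (Finset.card_filter_le_card_inter_of_forall_sdiff hcorrect).trans hFaultyCard
  have hnone : (F.filter (fun y => d ∈ S' y)).card = 0 := by
    rcases hValid d with h | h <;> omega
  exact Finset.filter_eq_empty_iff.mp (Finset.card_eq_zero.mp hnone) hx

/-- A dependency never reported by any correct member of the fast-path quorum
`F` cannot appear in any valid (possibly manipulated) certificate: it could be
reported at most `f` times, which validity forces down to zero. -/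
theorem manipulated_fpc_no_fabricated_dependencies {α : Type*} [DecidableEq α]
    {D : Type*} [DecidableEq D] (f : ℕ)
    (R F Faulty : Finset α) (hF : F ⊆ R) (hFcard : F.card = 2 * f)
    (hFaultyCard : (F ∩ Faulty).card ≤ f)
    (S S' : α → Finset D)
    (hAgree : ∀ x ∈ F \ Faulty, S' x = S x)
    (hValid : ∀ e : D,
      (F.filter (fun x => e ∈ S' x)).card = 0 ∨
      f + 1 ≤ (F.filter (fun x => e ∈ S' x)).card) :
    ∀ d : D, (∀ x ∈ F \ Faulty, d ∉ S x) → ∀ x ∈ F, d ∉ S' x :=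
  manipulated_fpc_no_fabricated_dependencies_general f F Faulty hFaultyCard S S' hAgree hValid
end
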